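/- There exists a finite simple connected graph G with at least two vertices such that μ(G) > max over all pairs of adjacent vertices v_i ~ v_j of G of d_i + d_j + m_i + m_j − 4·d_i·d_j/(m_i + m_j). (This disproves conjectured edge-maximum bound 63 of Brankov, Hansen and Stevanović.) -/

import Mathlib

/-!
The spider with three legs of length three is a counterexample. Along its edges the quantity
`d_i + d_j + m_i + m_j - 4 d_i d_j / (m_i + m_j)` takes only the values `25/6`, `4` and `59/14`,
all below `43/10`. On the other hand the largest Laplacian eigenvalue dominates every Rayleigh
quotient, and at the vector taking the values `31, -15, 7, -2` on the successive levels of the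
spider the Rayleigh quotient is `8043/1795 > 43/10`.
-/

noncomputable section

open Finset

/-- The degree of a vertex, as a real number. -/
def degR {V : Type*} [Fintype V] (G : SimpleGraph V) (v : V) : ℝ :=
  letI := Classical.decRel G.Adj
  (G.degree v : ℝ)

/-- The average degree of the neighbours of a vertex, as a real number:
`m_v = (∑_{u ~ v} d_u) / d_v`. -/
def avgDegR {V : Type*} [Fintype V] (G : SimpleGraph V) (v : V) : ℝ :=
  letI := Classical.decRel G.Adj
  (∑ u ∈ G.neighborFinset v, (G.degree u : ℝ)) / (G.degree v : ℝ)

/-- The largest eigenvalue of the Laplacian matrix `L = D - A` of a finite graph. -/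
def lapSpecRad {V : Type*} [Fintype V] [DecidableEq V] [Nonempty V]
    (G : SimpleGraph V) : ℝ :=
  letI := Classical.decRel G.Adj
  ⨆ i, (SimpleGraph.posSemidef_lapMatrix ℝ G).isHermitian.eigenvalues i

open Matrix

theorem Matrix.IsHermitian.exists_lt_eigenvalues {n : Type*} [Fintype n] [DecidableEq n]
    {A : Matrix n n ℝ} (hA : A.IsHermitian) {x : n → ℝ} {c : ℝ}
    (h : c * (x ⬝ᵥ x) < x ⬝ᵥ (A *ᵥ x)) : ∃ i, c < hA.eigenvalues i := by
  by_contra! hle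
  have hB : (algebraMap ℝ _ c - A).IsHermitian := (IsSelfAdjoint.algebraMap _ (.all c)).sub hA
  have hBpsd : (algebraMap ℝ _ c - A).PosSemidef := by
    refine hB.posSemidef_iff_eigenvalues_nonneg.mpr fun i => ?_
    have hi := hB.eigenvalues_mem_spectrum_real i
    rw [← spectrum.singleton_sub_eq, hA.spectrum_real_eq_range_eigenvalues] at hi
    obtain ⟨_, rfl, _, ⟨j, rfl⟩, hj⟩ := hi
    simp only [Pi.zero_apply, ← hj]
    linarith [hle j]
  have hquad := hBpsd.dotProduct_mulVec_nonneg x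
  simp only [star_trivial, sub_mulVec, dotProduct_sub, Algebra.algebraMap_eq_smul_one, smul_mulVec,
    one_mulVec, dotProduct_smul, smul_eq_mul] at hquad
  linarith

section Graph

variable {V : Type*} [Fintype V] (G : SimpleGraph V) [decAdj : DecidableRel G.Adj]

theorem lt_lapSpecRad_of_lt_dotProduct [DecidableEq V] [Nonempty V] {x : V → ℝ} {c : ℝ}
    (h : c * (x ⬝ᵥ x) < x ⬝ᵥ (G.lapMatrix ℝ *ᵥ x)) : c < lapSpecRad G := by
  obtain rfl : decAdj = Classical.decRel G.Adj := Subsingleton.elim _ _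
  let _ := Classical.decRel G.Adj
  obtain ⟨i, hi⟩ := (G.posSemidef_lapMatrix ℝ).isHermitian.exists_lt_eigenvalues h
  exact hi.trans_le (le_ciSup (Set.finite_range _).bddAbove i)

theorem map_comp_lapMatrix_mulVec [DecidableEq V] {R S : Type*} [CommRing R] [CommRing S]
    (f : R →+* S) (x : V → R) : f ∘ (G.lapMatrix R *ᵥ x) = G.lapMatrix S *ᵥ (f ∘ x) := by
  ext v
  simp [SimpleGraph.lapMatrix_mulVec_apply, map_sum]

def avgDeg (K : Type*) [DivisionRing K] (v : V) : K :=
  (∑ u ∈ G.neighborFinset v, (G.degree u : K)) / G.degree v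

theorem map_avgDeg {K L : Type*} [DivisionRing K] [DivisionRing L] (f : K →+* L) (v : V) :
    f (avgDeg G K v) = avgDeg G L v := by
  simp [avgDeg, map_div₀, map_sum]

theorem degR_eq (v : V) : degR G v = G.degree v := by
  obtain rfl : decAdj = Classical.decRel G.Adj := Subsingleton.elim _ _
  rfl

theorem avgDegR_eq (v : V) : avgDegR G v = avgDeg G ℝ v := by
  obtain rfl : decAdj = Classical.decRel G.Adj := Subsingleton.elim _ _
  rfl

end Graph

def edgeBound63 {K : Type*} [DivisionRing K] (di mi dj mj : K) : K :=
  di + dj + mi + mj - 4 * di * dj / (mi + mj)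

theorem map_edgeBound63 {K L : Type*} [DivisionRing K] [DivisionRing L] (f : K →+* L)
    (di mi dj mj : K) :
    f (edgeBound63 di mi dj mj) = edgeBound63 (f di) (f mi) (f dj) (f mj) := by
  simp [edgeBound63, map_div₀, map_ofNat]

/-- Vertex `0` is the centre and `k ≥ 1` is joined to `k - 3`; thanks to truncated subtraction,
`1, 2, 3` are all joined to `0`, and the loop at `0` is discarded by `fromRel`. -/
def spider : SimpleGraph (Fin 10) := SimpleGraph.fromRel fun i j => (j : ℕ) = i - 3

instance : DecidableRel spider.Adj := fun i j =>
  inferInstanceAs (Decidable (i ≠ j ∧ ((j : ℕ) = i - 3 ∨ (i : ℕ) = j - 3)))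

theorem spider_reachable_zero (v : Fin 10) : spider.Reachable 0 v := by
  obtain ⟨k, hk⟩ := v
  induction k using Nat.strong_induction_on with
  | _ k ih =>
    rcases Nat.eq_zero_or_pos k with rfl | hpos
    · rfl
    · have hadj : spider.Adj ⟨k - 3, by omega⟩ ⟨k, hk⟩ := by
        simp only [spider, SimpleGraph.fromRel_adj, ne_eq, Fin.mk.injEq, or_true, and_true]
        omega
      exact (ih (k - 3) (by omega) _).trans hadj.reachable

theorem spider_connected : spider.Connected :=
  (SimpleGraph.connected_iff _).mpr
    ⟨fun u v => (spider_reachable_zero u).symm.trans (spider_reachable_zero v), ⟨0⟩⟩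

theorem spider_edgeBound63_lt (i j : Fin 10) (h : spider.Adj i j) :
    edgeBound63 (spider.degree i : ℚ) (avgDeg spider ℚ i) (spider.degree j) (avgDeg spider ℚ j)
      < 43 / 10 := by
  revert i j
  decide +kernel

/-- An integer rounding of the Laplacian eigenvector of `spider` for its largest eigenvalue
`≈ 4.4812`; that eigenvector is constant on the levels `{0}, {1,2,3}, {4,5,6}, {7,8,9}`. -/
def spiderTestVector : Fin 10 → ℚ := ![31, -15, -15, -15, 7, 7, 7, -2, -2, -2]

theorem spider_lt_dotProduct_lapMatrix_mulVec :
    43 / 10 * (spiderTestVector ⬝ᵥ spiderTestVector)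
      < spiderTestVector ⬝ᵥ (spider.lapMatrix ℚ *ᵥ spiderTestVector) := by
  decide +kernel

theorem lt_lapSpecRad_spider : 43 / 10 < lapSpecRad spider := by
  refine lt_lapSpecRad_of_lt_dotProduct spider (x := Rat.castHom ℝ ∘ spiderTestVector) ?_
  have h := Rat.cast_strictMono (K := ℝ) spider_lt_dotProduct_lapMatrix_mulVec
  simpa only [← Rat.coe_castHom, map_mul, RingHom.map_dotProduct, map_comp_lapMatrix_mulVec,
    map_div₀, map_ofNat] using h

/-- There exists a finite simple connected graph `G` with at least two vertices whose
Laplacian spectral radius exceeds the conjectured edge-maximum bound. -/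
theorem exists_counterexample_bound63 :
    ∃ (V : Type) (_ : Fintype V) (_ : DecidableEq V) (_ : Nonempty V)
      (G : SimpleGraph V), G.Connected ∧ 2 ≤ Fintype.card V ∧
      ∀ i j : V, G.Adj i j →
        (fun di mi dj mj => di + dj + mi + mj - 4 * di * dj / (mi + mj))
          (degR G i) (avgDegR G i) (degR G j) (avgDegR G j) < lapSpecRad G := by
  refine ⟨Fin 10, inferInstance, inferInstance, inferInstance, spider, spider_connected,
    by simp, fun i j hij => ?_⟩
  calc edgeBound63 (degR spider i) (avgDegR spider i) (degR spider j) (avgDegR spider j)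
      = Rat.castHom ℝ (edgeBound63 (spider.degree i : ℚ) (avgDeg spider ℚ i)
          (spider.degree j) (avgDeg spider ℚ j)) := by
        simp only [map_edgeBound63, map_avgDeg, map_natCast, degR_eq, avgDegR_eq]
    _ < Rat.castHom ℝ (43 / 10) := Rat.cast_strictMono (spider_edgeBound63_lt i j hij)
    _ = 43 / 10 := by norm_num
    _ < lapSpecRad spider := lt_lapSpecRad_spider
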